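/- arXiv:2305.08812 — 8 statements merged into one kernel-verified Lean document; each statement's English description precedes it below -/
import Mathlib

section
/- Same Longitudinal Safety (Theorem 1): Let x1_k, v1_k, x2_k, v2_k (k = 0,…,n) be finite sequences of reals such that for every k < n there exist accelerations a1_k, a2_k and a duration t_k with 0 ≤ t_k ≤ ρ satisfying: either (free driving) safeDist_s(v1_k, v2_k) ≤ x2_k − x1_k and −a_maxBrake ≤ a1_k ≤ a_maxAccel and −a_maxBrake ≤ a2_k ≤ a_maxAccel, or (proper response) safeDist_s(v1_k, v2_k) ≥ x2_k − x1_k and (a1_k ≤ −a_minBrake or (v1_k = 0 and a1_k = 0)) and (a2_k ≥ −a_maxBrake or (v2_k = 0 and a2_k = 0)); moreover v1_k + a1_k·s ≥ 0 and v2_k + a2_k·s ≥ 0 for all s ∈ [0, t_k], and (x1_{k+1}, v1_{k+1}, x2_{k+1}, v2_{k+1}) is the kinematic update of (x1_k, v1_k, x2_k, v2_k) over duration t_k with accelerations a1_k, a2_k. If x1_0 ≤ x2_0 and safeDist_s(v1_0, v2_0) ≤ x2_0 − x1_0, then x1_k ≤ x2_k for all k = 0,…,n. -/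
/-!
Write `d = x₂ - x₁`. The invariant is `d ≥ 0` together with
`v₁² / (2 a_minBrake) ≤ d + v₂² / (2 a_maxBrake)`: braking at only `a_minBrake`, the follower would
stop behind the leader braking at `a_maxBrake`. A car covering `s` at constant acceleration `a`
ends at a speed `u` with `u² = v² + 2 a s`, so the follower's stopping distance drops by at least,
and the leader's by at most, the distance covered. Hence a proper response keeps the second
inequality, and under free driving the safe distance already covers the follower accelerating for
the whole response time. Under proper response the gap stays nonnegative: either the leader can stop
within the step and the invariant bounds the gap, or one compares with the extreme profiles
`-a_minBrake`, `-a_maxBrake`; if the follower's extreme final speed is the larger, the invariant at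
the end of those profiles bounds the gap, and otherwise the gap has grown.
-/

/-- RSS same-direction safe distance. -/
noncomputable def safeDistS (aminBrake amaxBrake amaxAccel ρ v1 v2 : ℝ) : ℝ :=
  max (v1 * ρ + (1/2) * amaxAccel * ρ^2 + (v1 + ρ * amaxAccel)^2 / (2 * aminBrake)
    - v2^2 / (2 * amaxBrake)) 0

noncomputable def travel (v a t : ℝ) : ℝ := v * t + (1/2) * a * t ^ 2

noncomputable def stoppingDist (a v : ℝ) : ℝ := v ^ 2 / (2 * a)

section Kinematics

variable {b B v a t : ℝ}

lemma travel_eq_mul_add (v a t : ℝ) : travel v a t = t * (v + (v + a * t)) / 2 := by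
  unfold travel; ring

lemma travel_nonneg (ht : 0 ≤ t) (hv : 0 ≤ v) (hu : 0 ≤ v + a * t) : 0 ≤ travel v a t := by
  rw [travel_eq_mul_add]
  exact div_nonneg (mul_nonneg ht (add_nonneg hv hu)) zero_le_two

lemma sq_add_mul_eq (v a t : ℝ) : (v + a * t) ^ 2 = v ^ 2 + 2 * a * travel v a t := by
  unfold travel; ring

lemma travel_le_travel {a' : ℝ} (v t : ℝ) (ha : a ≤ a') : travel v a t ≤ travel v a' t := by
  unfold travel; gcongr

lemma travel_le_travel_of_le_of_le {A ρ : ℝ} (hv : 0 ≤ v) (hA : 0 ≤ A) (ht : 0 ≤ t) (htρ : t ≤ ρ)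
    (ha : a ≤ A) : travel v a t ≤ travel v A ρ :=
  (travel_le_travel v t ha).trans (by unfold travel; gcongr)

lemma stoppingDist_nonneg (hb : 0 < b) (v : ℝ) : 0 ≤ stoppingDist b v := by
  unfold stoppingDist; positivity

lemma stoppingDist_le_stoppingDist {w : ℝ} (hb : 0 < b) (hbB : b ≤ B) (hv : 0 ≤ v) (hvw : v ≤ w) :
    stoppingDist B v ≤ stoppingDist b w := by
  unfold stoppingDist; gcongr

lemma stoppingDist_add_mul_le (hb : 0 < b) (ha : a ≤ -b) (hT : 0 ≤ travel v a t) :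
    stoppingDist b (v + a * t) ≤ stoppingDist b v - travel v a t := by
  have hsq : (v + a * t) ^ 2 ≤ v ^ 2 - 2 * b * travel v a t := by
    rw [sq_add_mul_eq]; nlinarith
  calc stoppingDist b (v + a * t) ≤ (v ^ 2 - 2 * b * travel v a t) / (2 * b) := by
        unfold stoppingDist; gcongr
    _ = stoppingDist b v - travel v a t := by unfold stoppingDist; field_simp

lemma stoppingDist_sub_travel_le (hB : 0 < B) (ha : -B ≤ a) (hT : 0 ≤ travel v a t) :
    stoppingDist B v - travel v a t ≤ stoppingDist B (v + a * t) := by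
  have hsq : v ^ 2 - 2 * B * travel v a t ≤ (v + a * t) ^ 2 := by
    rw [sq_add_mul_eq]; nlinarith
  calc stoppingDist B v - travel v a t = (v ^ 2 - 2 * B * travel v a t) / (2 * B) := by
        unfold stoppingDist; field_simp
    _ ≤ stoppingDist B (v + a * t) := by unfold stoppingDist; gcongr

lemma stoppingDist_le_travel (hB : 0 < B) (hv : 0 ≤ v) (hvt : v ≤ B * t) (hu : 0 ≤ v + a * t) :
    stoppingDist B v ≤ travel v a t := by
  have ht : 0 ≤ t := nonneg_of_mul_nonneg_right (hv.trans hvt) hB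
  rw [stoppingDist, div_le_iff₀ (by positivity), travel_eq_mul_add]
  nlinarith [mul_le_mul_of_nonneg_left hvt hv, mul_nonneg (mul_nonneg hB.le ht) hu]

end Kinematics

def SafeGap (b B v₁ v₂ d : ℝ) : Prop :=
  0 ≤ d ∧ stoppingDist b v₁ ≤ d + stoppingDist B v₂

section SafeGap

variable {b B A ρ d v₁ v₂ a₁ a₂ t : ℝ}

lemma safeDistS_eq (b B A ρ v₁ v₂ : ℝ) : safeDistS b B A ρ v₁ v₂ =
    max (travel v₁ A ρ + stoppingDist b (v₁ + ρ * A) - stoppingDist B v₂) 0 := rfl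

lemma nonneg_of_safeDistS_le (h : safeDistS b B A ρ v₁ v₂ ≤ d) : 0 ≤ d :=
  (le_max_right _ _).trans h

lemma travel_add_stoppingDist_le_of_safeDistS_le (h : safeDistS b B A ρ v₁ v₂ ≤ d) :
    travel v₁ A ρ + stoppingDist b (v₁ + ρ * A) ≤ d + stoppingDist B v₂ := by
  rw [safeDistS_eq] at h
  linarith [(le_max_left _ _).trans h]

lemma safeGap_of_safeDistS_le (hb : 0 < b) (hA : 0 ≤ A) (hρ : 0 ≤ ρ) (hv₁ : 0 ≤ v₁)
    (h : safeDistS b B A ρ v₁ v₂ ≤ d) : SafeGap b B v₁ v₂ d := by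
  have hT : 0 ≤ travel v₁ A ρ := by unfold travel; positivity
  have hstop := stoppingDist_le_stoppingDist hb le_rfl hv₁
    (le_add_of_nonneg_right (mul_nonneg hρ hA))
  exact ⟨nonneg_of_safeDistS_le h, by linarith [travel_add_stoppingDist_le_of_safeDistS_le h]⟩

lemma safeGap_step_of_safeDistS_le (hb : 0 < b) (hbB : b ≤ B) (hA : 0 ≤ A) (ht : 0 ≤ t)
    (htρ : t ≤ ρ) (hv₁ : 0 ≤ v₁) (hv₂ : 0 ≤ v₂) (hu₁ : 0 ≤ v₁ + a₁ * t) (hu₂ : 0 ≤ v₂ + a₂ * t)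
    (ha₁ : a₁ ≤ A) (ha₂ : -B ≤ a₂) (h : safeDistS b B A ρ v₁ v₂ ≤ d) :
    SafeGap b B (v₁ + a₁ * t) (v₂ + a₂ * t) (d + travel v₂ a₂ t - travel v₁ a₁ t) := by
  set w := v₁ + ρ * A
  have hB : 0 < B := hb.trans_le hbB
  have hd := nonneg_of_safeDistS_le h
  have hsafe := travel_add_stoppingDist_le_of_safeDistS_le h
  have hT₁ := travel_le_travel_of_le_of_le hv₁ hA ht htρ ha₁
  have hT₂ := travel_nonneg ht hv₂ hu₂
  have hstop₂ := stoppingDist_sub_travel_le hB ha₂ hT₂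
  have hv₁w : v₁ ≤ w := le_add_of_nonneg_right (mul_nonneg (ht.trans htρ) hA)
  have hu₁w : v₁ + a₁ * t ≤ w := by
    nlinarith [mul_le_mul_of_nonneg_right ha₁ ht, mul_le_mul_of_nonneg_left htρ hA]
  have hkey : stoppingDist b w ≤
      d + travel v₂ a₂ t - travel v₁ a₁ t + stoppingDist B (v₂ + a₂ * t) := by
    linarith
  refine ⟨?_, (stoppingDist_le_stoppingDist hb le_rfl hu₁ hu₁w).trans hkey⟩
  rcases le_or_gt v₂ w with h₂ | h₂
  · linarith [stoppingDist_le_stoppingDist hb hbB hv₂ h₂]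
  rcases le_or_gt (v₂ + a₂ * t) w with h₂' | h₂'
  · linarith [stoppingDist_le_stoppingDist hb hbB hu₂ h₂']
  have : travel v₁ a₁ t ≤ travel v₂ a₂ t := by
    rw [travel_eq_mul_add, travel_eq_mul_add]; gcongr t * ?_ / 2; linarith
  linarith

lemma SafeGap.add_travel_sub_travel_nonneg (hg : SafeGap b B v₁ v₂ d) (hb : 0 < b) (hbB : b ≤ B)
    (ht : 0 ≤ t) (hv₁ : 0 ≤ v₁) (hv₂ : 0 ≤ v₂) (hu₁ : 0 ≤ v₁ + a₁ * t) (hu₂ : 0 ≤ v₂ + a₂ * t)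
    (ha₁ : a₁ ≤ -b) (ha₂ : -B ≤ a₂) : 0 ≤ d + travel v₂ a₂ t - travel v₁ a₁ t := by
  obtain ⟨hd, hstop⟩ := hg
  have hB : 0 < B := hb.trans_le hbB
  rcases le_or_gt v₂ (B * t) with hstop₂ | hmove₂
  · linarith [stoppingDist_le_travel hB hv₂ hstop₂ hu₂, stoppingDist_nonneg hb (v₁ + a₁ * t),
      stoppingDist_add_mul_le hb ha₁ (travel_nonneg ht hv₁ hu₁)]
  have hp : 0 ≤ v₁ + -b * t := by nlinarith [mul_le_mul_of_nonneg_right ha₁ ht]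
  have hq : 0 ≤ v₂ + -B * t := by linarith
  have hextreme : stoppingDist b (v₁ + -b * t) - stoppingDist B (v₂ + -B * t) ≤
      d + travel v₂ (-B) t - travel v₁ (-b) t := by
    linarith [stoppingDist_add_mul_le hb le_rfl (travel_nonneg ht hv₁ hp),
      stoppingDist_sub_travel_le hB le_rfl (travel_nonneg ht hv₂ hq)]
  have hmono : travel v₂ (-B) t - travel v₁ (-b) t ≤ travel v₂ a₂ t - travel v₁ a₁ t := by
    linarith [travel_le_travel v₂ t ha₂, travel_le_travel v₁ t ha₁]
  rcases le_total (v₂ + -B * t) (v₁ + -b * t) with hqp | hpq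
  · linarith [stoppingDist_le_stoppingDist hb hbB hq hqp]
  · have : 0 ≤ travel v₂ (-B) t - travel v₁ (-b) t := by
      unfold travel
      nlinarith [mul_nonneg ht (sub_nonneg.2 hpq), mul_nonneg (sub_nonneg.2 hbB) (sq_nonneg t)]
    linarith

lemma SafeGap.step_of_brake (hg : SafeGap b B v₁ v₂ d) (hb : 0 < b) (hbB : b ≤ B) (ht : 0 ≤ t)
    (hv₁ : 0 ≤ v₁) (hv₂ : 0 ≤ v₂) (hu₁ : 0 ≤ v₁ + a₁ * t) (hu₂ : 0 ≤ v₂ + a₂ * t)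
    (ha₁ : a₁ ≤ -b ∨ (v₁ = 0 ∧ a₁ = 0)) (ha₂ : -B ≤ a₂) :
    SafeGap b B (v₁ + a₁ * t) (v₂ + a₂ * t) (d + travel v₂ a₂ t - travel v₁ a₁ t) := by
  have hT₂ := travel_nonneg ht hv₂ hu₂
  have hstop₂ := stoppingDist_sub_travel_le (hb.trans_le hbB) ha₂ hT₂
  rcases ha₁ with ha₁ | ⟨rfl, rfl⟩
  · exact ⟨hg.add_travel_sub_travel_nonneg hb hbB ht hv₁ hv₂ hu₁ hu₂ ha₁ ha₂,
      by linarith [hg.2, stoppingDist_add_mul_le hb ha₁ (travel_nonneg ht hv₁ hu₁)]⟩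
  · have h₀ : travel 0 0 t = 0 := by simp [travel]
    rw [zero_mul, add_zero, h₀, sub_zero]
    exact ⟨by linarith [hg.1], by linarith [hg.2]⟩

end SafeGap

theorem same_longitudinal_safety_general
    (aminBrake amaxBrake amaxAccel ρ : ℝ)
    (hmin : 0 < aminBrake) (hminmax : aminBrake < amaxBrake)
    (hacc : 0 < amaxAccel)
    (n : ℕ) (x1 v1 x2 v2 : ℕ → ℝ)
    (hstep : ∀ k < n, ∃ a1 a2 t : ℝ, 0 ≤ t ∧ t ≤ ρ ∧
      ((safeDistS aminBrake amaxBrake amaxAccel ρ (v1 k) (v2 k) ≤ x2 k - x1 k ∧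
        -amaxBrake ≤ a1 ∧ a1 ≤ amaxAccel ∧ -amaxBrake ≤ a2 ∧ a2 ≤ amaxAccel) ∨
       (safeDistS aminBrake amaxBrake amaxAccel ρ (v1 k) (v2 k) ≥ x2 k - x1 k ∧
        (a1 ≤ -aminBrake ∨ (v1 k = 0 ∧ a1 = 0)) ∧
        (a2 ≥ -amaxBrake ∨ (v2 k = 0 ∧ a2 = 0)))) ∧
      (∀ s : ℝ, 0 ≤ s → s ≤ t → v1 k + a1 * s ≥ 0 ∧ v2 k + a2 * s ≥ 0) ∧
      x1 (k+1) = x1 k + v1 k * t + (1/2) * a1 * t^2 ∧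
      v1 (k+1) = v1 k + a1 * t ∧
      x2 (k+1) = x2 k + v2 k * t + (1/2) * a2 * t^2 ∧
      v2 (k+1) = v2 k + a2 * t)
    (hinit2 : safeDistS aminBrake amaxBrake amaxAccel ρ (v1 0) (v2 0) ≤ x2 0 - x1 0) :
    ∀ k ≤ n, x1 k ≤ x2 k := by
  -- Speeds are known to be nonnegative only at the start of a step, which `SafeGap` needs.
  have hsafe : ∀ k ≤ n, SafeGap aminBrake amaxBrake (v1 k) (v2 k) (x2 k - x1 k) ∨
      safeDistS aminBrake amaxBrake amaxAccel ρ (v1 k) (v2 k) ≤ x2 k - x1 k := by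
    intro k hk
    induction k with
    | zero => exact .inr hinit2
    | succ k ih =>
      obtain ⟨a1, a2, t, ht, htρ, hresp, hspeed, hx1, hv1, hx2, hv2⟩ := hstep k hk
      obtain ⟨hv1k, hv2k⟩ : 0 ≤ v1 k ∧ 0 ≤ v2 k := by simpa using hspeed 0 le_rfl ht
      obtain ⟨hu1, hu2⟩ := hspeed t ht le_rfl
      have hgap : x2 (k + 1) - x1 (k + 1) =
          x2 k - x1 k + travel (v2 k) a2 t - travel (v1 k) a1 t := by
        rw [hx1, hx2]; unfold travel; ring
      rw [hgap, hv1, hv2]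
      refine .inl ?_
      rcases hresp with ⟨hdist, -, ha1, ha2, -⟩ | ⟨-, ha1, ha2⟩
      · exact safeGap_step_of_safeDistS_le hmin hminmax.le hacc.le ht htρ hv1k hv2k hu1 hu2 ha1 ha2
          hdist
      · have hg := (ih (by omega)).elim id
          (safeGap_of_safeDistS_le hmin hacc.le (ht.trans htρ) hv1k)
        exact hg.step_of_brake hmin hminmax.le ht hv1k hv2k hu1 hu2 ha1
          (ha2.elim id fun h => by linarith [h.2])
  intro k hk
  exact sub_nonneg.1 ((hsafe k hk).elim And.left nonneg_of_safeDistS_le)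

/-- Same Longitudinal Safety (Theorem 1). -/
theorem same_longitudinal_safety
    (aminBrake amaxBrake amaxAccel ρ : ℝ)
    (hmin : 0 < aminBrake) (hminmax : aminBrake < amaxBrake)
    (hacc : 0 < amaxAccel) (hρ : 0 < ρ)
    (n : ℕ) (x1 v1 x2 v2 : ℕ → ℝ)
    (hstep : ∀ k < n, ∃ a1 a2 t : ℝ, 0 ≤ t ∧ t ≤ ρ ∧
      ((safeDistS aminBrake amaxBrake amaxAccel ρ (v1 k) (v2 k) ≤ x2 k - x1 k ∧
        -amaxBrake ≤ a1 ∧ a1 ≤ amaxAccel ∧ -amaxBrake ≤ a2 ∧ a2 ≤ amaxAccel) ∨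
       (safeDistS aminBrake amaxBrake amaxAccel ρ (v1 k) (v2 k) ≥ x2 k - x1 k ∧
        (a1 ≤ -aminBrake ∨ (v1 k = 0 ∧ a1 = 0)) ∧
        (a2 ≥ -amaxBrake ∨ (v2 k = 0 ∧ a2 = 0)))) ∧
      (∀ s : ℝ, 0 ≤ s → s ≤ t → v1 k + a1 * s ≥ 0 ∧ v2 k + a2 * s ≥ 0) ∧
      x1 (k+1) = x1 k + v1 k * t + (1/2) * a1 * t^2 ∧
      v1 (k+1) = v1 k + a1 * t ∧
      x2 (k+1) = x2 k + v2 k * t + (1/2) * a2 * t^2 ∧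
      v2 (k+1) = v2 k + a2 * t)
    (hinit1 : x1 0 ≤ x2 0)
    (hinit2 : safeDistS aminBrake amaxBrake amaxAccel ρ (v1 0) (v2 0) ≤ x2 0 - x1 0) :
    ∀ k ≤ n, x1 k ≤ x2 k :=
  same_longitudinal_safety_general aminBrake amaxBrake amaxAccel ρ hmin hminmax hacc n x1 v1 x2 v2
    hstep hinit2
end

section
/- Same Longitudinal Optimality, trajectory form (Theorem 2 on optimality): Suppose v1 ≥ 0, v2 ≥ 0, x1 ≤ x2, ε > 0, and x2 − x1 = safeDist_s(v1, v2) − ε. Define the rear-car worst-case trajectory X1(t) by: X1(t) = x1 + v1·t + (1/2)·a_maxAccel·t² for 0 ≤ t ≤ ρ; X1(t) = X1(ρ) + V·(t − ρ) − (1/2)·a_minBrake·(t − ρ)² for ρ ≤ t ≤ ρ + V/a_minBrake, where V = v1 + ρ·a_maxAccel; and X1(t) = X1(ρ + V/a_minBrake) for t ≥ ρ + V/a_minBrake. Define the front-car trajectory X2(t) by: X2(t) = x2 + v2·t − (1/2)·a_maxBrake·t² for 0 ≤ t ≤ v2/a_maxBrake, and X2(t) = x2 + v2²/(2·a_maxBrake)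 for t ≥ v2/a_maxBrake. Then there exists a time T ≥ 0 with X1(T) > X2(T), i.e., the cars collide. -/
/-- Rear-car worst-case trajectory: accelerate at `amaxAccel` for time `ρ`,
then brake at rate `aminBrake` until stopped, then remain stopped. -/
noncomputable def X1traj (aminBrake amaxAccel ρ x1 v1 : ℝ) (t : ℝ) : ℝ :=
  if t ≤ ρ then x1 + v1 * t + (1/2) * amaxAccel * t^2
  else if t ≤ ρ + (v1 + ρ * amaxAccel) / aminBrake then
    (x1 + v1 * ρ + (1/2) * amaxAccel * ρ^2) + (v1 + ρ * amaxAccel) * (t - ρ)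
      - (1/2) * aminBrake * (t - ρ)^2
  else
    (x1 + v1 * ρ + (1/2) * amaxAccel * ρ^2)
      + (v1 + ρ * amaxAccel) * ((v1 + ρ * amaxAccel) / aminBrake)
      - (1/2) * aminBrake * ((v1 + ρ * amaxAccel) / aminBrake)^2

/-- Front-car trajectory: brake at rate `amaxBrake` until stopped, then remain stopped. -/
noncomputable def X2traj (amaxBrake x2 v2 : ℝ) (t : ℝ) : ℝ :=
  if t ≤ v2 / amaxBrake then x2 + v2 * t - (1/2) * amaxBrake * t^2
  else x2 + v2^2 / (2 * amaxBrake)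

/-!
Once both cars have stopped, the rear car has covered its response distance plus its braking
distance from speed `v1 + ρ * amaxAccel`, and the front car its braking distance from `v2`. The
difference of these is the expression inside `safeDistS`, so at any late enough time the gap
between the cars has shrunk by exactly `safeDistS`, overshooting the initial gap by `ε`.
-/

open Filter

noncomputable def brakingDist (a v : ℝ) : ℝ := v ^ 2 / (2 * a)

/-- At `a = 0` both sides are `0`, since `x / 0 = 0`. -/
theorem brakingDist_eq_displacement (a v : ℝ) :
    v * (v / a) - (1/2) * a * (v / a) ^ 2 = brakingDist a v := by
  unfold brakingDist
  rcases eq_or_ne a 0 with rfl | ha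
  · simp
  · field_simp
    ring

theorem X1traj_eventually_eq (aminBrake amaxAccel ρ x1 v1 : ℝ) :
    ∀ᶠ t in atTop, X1traj aminBrake amaxAccel ρ x1 v1 t =
      x1 + v1 * ρ + (1/2) * amaxAccel * ρ ^ 2 + brakingDist aminBrake (v1 + ρ * amaxAccel) := by
  filter_upwards [eventually_gt_atTop ρ,
    eventually_gt_atTop (ρ + (v1 + ρ * amaxAccel) / aminBrake)] with t hρ hstop
  rw [X1traj, if_neg hρ.not_ge, if_neg hstop.not_ge, add_sub_assoc,
    brakingDist_eq_displacement]

theorem X2traj_eventually_eq (amaxBrake x2 v2 : ℝ) :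
    ∀ᶠ t in atTop, X2traj amaxBrake x2 v2 t = x2 + brakingDist amaxBrake v2 := by
  filter_upwards [eventually_gt_atTop (v2 / amaxBrake)] with t hstop
  rw [X2traj, if_neg hstop.not_ge, brakingDist]

theorem safeDistS_eq_of_pos {aminBrake amaxBrake amaxAccel ρ v1 v2 : ℝ}
    (h : 0 < safeDistS aminBrake amaxBrake amaxAccel ρ v1 v2) :
    safeDistS aminBrake amaxBrake amaxAccel ρ v1 v2 =
      v1 * ρ + (1/2) * amaxAccel * ρ ^ 2 + brakingDist aminBrake (v1 + ρ * amaxAccel)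
        - brakingDist amaxBrake v2 :=
  max_eq_left ((lt_max_iff.mp h).resolve_right (lt_irrefl 0)).le

theorem same_longitudinal_optimality_trajectory_general
    (aminBrake amaxBrake amaxAccel ρ : ℝ)
    (x1 x2 v1 v2 ε : ℝ)
    (hx : x1 ≤ x2) (hε : ε > 0)
    (hdist : x2 - x1 = safeDistS aminBrake amaxBrake amaxAccel ρ v1 v2 - ε) :
    ∃ T : ℝ, T ≥ 0 ∧ X1traj aminBrake amaxAccel ρ x1 v1 T > X2traj amaxBrake x2 v2 T := by
  obtain ⟨T, hT, hX1, hX2⟩ := ((eventually_ge_atTop 0).and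
    ((X1traj_eventually_eq aminBrake amaxAccel ρ x1 v1).and
      (X2traj_eventually_eq amaxBrake x2 v2))).exists
  refine ⟨T, hT, ?_⟩
  have hsafe :=
    safeDistS_eq_of_pos (by linarith : 0 < safeDistS aminBrake amaxBrake amaxAccel ρ v1 v2)
  rw [hX1, hX2]
  linarith

/-- Same Longitudinal Optimality, trajectory form. -/
theorem same_longitudinal_optimality_trajectory
    (aminBrake amaxBrake amaxAccel ρ : ℝ)
    (hmin : 0 < aminBrake) (hminmax : aminBrake < amaxBrake)
    (hacc : 0 < amaxAccel) (hρ : 0 < ρ)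
    (x1 x2 v1 v2 ε : ℝ)
    (hv1 : v1 ≥ 0) (hv2 : v2 ≥ 0) (hx : x1 ≤ x2) (hε : ε > 0)
    (hdist : x2 - x1 = safeDistS aminBrake amaxBrake amaxAccel ρ v1 v2 - ε) :
    ∃ T : ℝ, T ≥ 0 ∧ X1traj aminBrake amaxAccel ρ x1 v1 T > X2traj amaxBrake x2 v2 T :=
  same_longitudinal_optimality_trajectory_general aminBrake amaxBrake amaxAccel ρ x1 x2 v1 v2 ε hx
    hε hdist
end

section
/- Loop-invariant base case, same direction: If v1 ≥ 0 and safeDist_s(v1, v2) ≤ x2 − x1, then the same-direction loop invariant holds in its stopping-distance part: x1 + v1²/(2·a_minBrake) ≤ x2 + v2²/(2·a_maxBrake). -/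
/-- Accelerating for the response time `ρ` and then braking gently takes the rear car at least as
far as braking gently right away. -/
theorem sub_le_safeDistS {aminBrake amaxAccel ρ v1 : ℝ} (amaxBrake v2 : ℝ)
    (hmin : 0 ≤ aminBrake) (hacc : 0 ≤ amaxAccel) (hρ : 0 ≤ ρ) (hv1 : 0 ≤ v1) :
    v1^2 / (2 * aminBrake) - v2^2 / (2 * amaxBrake) ≤
      safeDistS aminBrake amaxBrake amaxAccel ρ v1 v2 := by
  have hspeed : v1^2 ≤ (v1 + ρ * amaxAccel)^2 :=
    pow_le_pow_left₀ hv1 (le_add_of_nonneg_right (mul_nonneg hρ hacc)) 2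
  have hbrake : v1^2 / (2 * aminBrake) ≤ (v1 + ρ * amaxAccel)^2 / (2 * aminBrake) :=
    div_le_div_of_nonneg_right hspeed (by positivity)
  calc v1^2 / (2 * aminBrake) - v2^2 / (2 * amaxBrake)
      ≤ v1 * ρ + (1/2) * amaxAccel * ρ^2 + (v1 + ρ * amaxAccel)^2 / (2 * aminBrake)
          - v2^2 / (2 * amaxBrake) := by
        have : 0 ≤ v1 * ρ := mul_nonneg hv1 hρ
        have : 0 ≤ (1/2) * amaxAccel * ρ^2 := by positivity
        linarith
    _ ≤ safeDistS aminBrake amaxBrake amaxAccel ρ v1 v2 := le_max_left _ _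

theorem loop_invariant_base_same_general
    (aminBrake amaxBrake amaxAccel ρ : ℝ)
    (hmin : 0 < aminBrake)
    (hacc : 0 < amaxAccel) (hρ : 0 < ρ)
    (x1 x2 v1 v2 : ℝ)
    (hv1 : v1 ≥ 0)
    (hdist : safeDistS aminBrake amaxBrake amaxAccel ρ v1 v2 ≤ x2 - x1) :
    x1 + v1^2 / (2 * aminBrake) ≤ x2 + v2^2 / (2 * amaxBrake) := by
  linarith [sub_le_safeDistS amaxBrake v2 hmin.le hacc.le hρ.le hv1]

/-- Loop-invariant base case, same direction. -/
theorem loop_invariant_base_same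
    (aminBrake amaxBrake amaxAccel ρ : ℝ)
    (hmin : 0 < aminBrake) (hminmax : aminBrake < amaxBrake)
    (hacc : 0 < amaxAccel) (hρ : 0 < ρ)
    (x1 x2 v1 v2 : ℝ)
    (hv1 : v1 ≥ 0)
    (hdist : safeDistS aminBrake amaxBrake amaxAccel ρ v1 v2 ≤ x2 - x1) :
    x1 + v1^2 / (2 * aminBrake) ≤ x2 + v2^2 / (2 * amaxBrake) :=
  loop_invariant_base_same_general aminBrake amaxBrake amaxAccel ρ hmin hacc hρ x1 x2 v1 v2 hv1
    hdist
end

section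
/- Loop-invariant preservation under free driving, same direction (inductive step of Theorem 1, case safeDist_s(v1, v2) ≤ x2 − x1): Suppose v1 ≥ 0, v2 ≥ 0, x1 ≤ x2, safeDist_s(v1, v2) ≤ x2 − x1, −a_maxBrake ≤ a1 ≤ a_maxAccel, −a_maxBrake ≤ a2 ≤ a_maxAccel, 0 ≤ t ≤ ρ, and v1 + a1·s ≥ 0 and v2 + a2·s ≥ 0 for all s ∈ [0, t]. Let (x̃1, ṽ1, x̃2, ṽ2) be the kinematic update of (x1, v1, x2, v2) over duration t with accelerations a1, a2. Then x̃1 ≤ x̃2 and x̃1 + ṽ1²/(2·a_minBrake) ≤ x̃2 + ṽ2²/(2·a_maxBrake). -/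
section Kinematics

variable {v w a a' A B t ρ : ℝ}

theorem displacement_eq_mul_average_velocity (v a t : ℝ) :
    v * t + 1/2 * a * t^2 = t * (v + (v + a * t)) / 2 := by
  ring

theorem displacement_nonneg (ht : 0 ≤ t) (hv : 0 ≤ v) (hv' : 0 ≤ v + a * t) :
    0 ≤ v * t + 1/2 * a * t^2 := by
  rw [displacement_eq_mul_average_velocity]
  positivity

theorem displacement_le_displacement (ht : 0 ≤ t) (hv : v ≤ w) (hv' : v + a * t ≤ w + a' * t) :
    v * t + 1/2 * a * t^2 ≤ w * t + 1/2 * a' * t^2 := by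
  rw [displacement_eq_mul_average_velocity, displacement_eq_mul_average_velocity]
  gcongr ?_ / 2
  exact mul_le_mul_of_nonneg_left (add_le_add hv hv') ht

theorem velocity_le_of_le_maxAccel (ht : 0 ≤ t) (htρ : t ≤ ρ) (ha : a ≤ A) (hA : 0 ≤ A) :
    v + a * t ≤ v + ρ * A := by
  nlinarith

theorem displacement_le_of_le_maxAccel (hv : 0 ≤ v) (ht : 0 ≤ t) (htρ : t ≤ ρ) (ha : a ≤ A)
    (hA : 0 ≤ A) : v * t + 1/2 * a * t^2 ≤ v * ρ + 1/2 * A * ρ^2 := by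
  have hat : a * t^2 ≤ A * ρ^2 := calc
    a * t^2 ≤ A * t^2 := by gcongr
    _ ≤ A * ρ^2 := by gcongr
  nlinarith

theorem sq_le_two_mul_displacement_add_sq (hBa : -B ≤ a) (ht : 0 ≤ t) (hv : 0 ≤ v)
    (hv' : 0 ≤ v + a * t) :
    v^2 ≤ 2 * B * (v * t + 1/2 * a * t^2) + (v + a * t)^2 := by
  have key : 2 * B * (v * t + 1/2 * a * t^2) + (v + a * t)^2 - v^2
      = t * (v + (v + a * t)) * (B + a) := by ring
  have : 0 ≤ t * (v + (v + a * t)) * (B + a) := by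
    apply mul_nonneg (mul_nonneg ht (by linarith)) (by linarith)
  linarith

theorem sq_div_le_displacement_add_sq_div (hB : 0 < B) (hBa : -B ≤ a) (ht : 0 ≤ t)
    (hv : 0 ≤ v) (hv' : 0 ≤ v + a * t) :
    v^2 / (2 * B) ≤ (v * t + 1/2 * a * t^2) + (v + a * t)^2 / (2 * B) := by
  rw [div_le_iff₀ (by positivity), add_mul, div_mul_cancel₀ _ (by positivity), mul_comm _ (2 * B)]
  exact sq_le_two_mul_displacement_add_sq hBa ht hv hv'

theorem le_velocities_of_sq_add_two_mul_displacement_le {P : ℝ} (hB : 0 ≤ B) (hBa : -B ≤ a)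
    (ht : 0 ≤ t) (hv : 0 ≤ v) (hv' : 0 ≤ v + a * t) (hP : 0 ≤ P)
    (h : P^2 + 2 * B * (v * t + 1/2 * a * t^2) ≤ v^2) :
    P ≤ v ∧ P ≤ v + a * t := by
  have hd := displacement_nonneg ht hv hv'
  have hbrake := sq_le_two_mul_displacement_add_sq hBa ht hv hv'
  constructor
  · exact (pow_le_pow_iff_left₀ hP hv two_ne_zero).1 (by nlinarith)
  · exact (pow_le_pow_iff_left₀ hP hv' two_ne_zero).1 (by linarith)

theorem sq_div_le_sq_div_add_of_sq_le_sq_add {b P d : ℝ} (hb : 0 < b) (hbB : b ≤ B)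
    (h : v^2 ≤ P^2 + 2 * B * d) : v^2 / (2 * B) ≤ P^2 / (2 * b) + d := calc
  v^2 / (2 * B) ≤ P^2 / (2 * B) + d := by
    have hB : 0 < 2 * B := by linarith
    rw [div_add' _ _ _ hB.ne', div_le_div_iff_of_pos_right hB]
    linarith
  _ ≤ P^2 / (2 * b) + d := by gcongr

end Kinematics

theorem loop_invariant_free_driving_same_general
    (aminBrake amaxBrake amaxAccel ρ : ℝ)
    (hmin : 0 < aminBrake) (hminmax : aminBrake < amaxBrake)
    (hacc : 0 < amaxAccel)
    (x1 x2 v1 v2 a1 a2 t : ℝ)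
    (hv1 : v1 ≥ 0) (hv2 : v2 ≥ 0) (hx : x1 ≤ x2)
    (hdist : safeDistS aminBrake amaxBrake amaxAccel ρ v1 v2 ≤ x2 - x1)
    (ha1u : a1 ≤ amaxAccel)
    (ha2l : -amaxBrake ≤ a2)
    (ht0 : 0 ≤ t) (htρ : t ≤ ρ)
    (hvpos : ∀ s : ℝ, 0 ≤ s → s ≤ t → v1 + a1 * s ≥ 0 ∧ v2 + a2 * s ≥ 0) :
    x1 + v1 * t + (1/2) * a1 * t^2 ≤ x2 + v2 * t + (1/2) * a2 * t^2 ∧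
    (x1 + v1 * t + (1/2) * a1 * t^2) + (v1 + a1 * t)^2 / (2 * aminBrake)
      ≤ (x2 + v2 * t + (1/2) * a2 * t^2) + (v2 + a2 * t)^2 / (2 * amaxBrake) := by
  have hB : 0 < amaxBrake := hmin.trans hminmax
  have hρA : 0 ≤ ρ * amaxAccel := mul_nonneg (ht0.trans htρ) hacc.le
  obtain ⟨hv1t, hv2t⟩ := hvpos t ht0 le_rfl
  have hsafe := (le_max_left _ _).trans hdist
  have hdisp1 := displacement_le_of_le_maxAccel hv1 ht0 htρ ha1u hacc.le
  have hvel1 := velocity_le_of_le_maxAccel (v := v1) ht0 htρ ha1u hacc.le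
  have hfront := sq_div_le_displacement_add_sq_div hB ha2l ht0 hv2 hv2t
  refine ⟨?_, ?_⟩
  · set P := v1 + ρ * amaxAccel
    rcases le_or_gt (v2^2) (P^2 + 2 * amaxBrake * (v2 * t + 1/2 * a2 * t^2)) with hslow | hfast
    · have := sq_div_le_sq_div_add_of_sq_le_sq_add hmin hminmax.le hslow
      linarith
    · obtain ⟨hPv2, hPv2t⟩ := le_velocities_of_sq_add_two_mul_displacement_le hB.le ha2l ht0 hv2
        hv2t (by linarith) hfast.le
      have := displacement_le_displacement ht0 (v := v1) (w := v2) (a := a1) (a' := a2)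
        (by linarith) (by linarith)
      linarith
  · have hrear : (v1 + a1 * t)^2 / (2 * aminBrake) ≤ (v1 + ρ * amaxAccel)^2 / (2 * aminBrake) := by
      gcongr
    linarith

/-- Loop-invariant preservation under free driving, same direction. -/
theorem loop_invariant_free_driving_same
    (aminBrake amaxBrake amaxAccel ρ : ℝ)
    (hmin : 0 < aminBrake) (hminmax : aminBrake < amaxBrake)
    (hacc : 0 < amaxAccel) (hρ : 0 < ρ)
    (x1 x2 v1 v2 a1 a2 t : ℝ)
    (hv1 : v1 ≥ 0) (hv2 : v2 ≥ 0) (hx : x1 ≤ x2)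
    (hdist : safeDistS aminBrake amaxBrake amaxAccel ρ v1 v2 ≤ x2 - x1)
    (ha1l : -amaxBrake ≤ a1) (ha1u : a1 ≤ amaxAccel)
    (ha2l : -amaxBrake ≤ a2) (ha2u : a2 ≤ amaxAccel)
    (ht0 : 0 ≤ t) (htρ : t ≤ ρ)
    (hvpos : ∀ s : ℝ, 0 ≤ s → s ≤ t → v1 + a1 * s ≥ 0 ∧ v2 + a2 * s ≥ 0) :
    x1 + v1 * t + (1/2) * a1 * t^2 ≤ x2 + v2 * t + (1/2) * a2 * t^2 ∧
    (x1 + v1 * t + (1/2) * a1 * t^2) + (v1 + a1 * t)^2 / (2 * aminBrake)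
      ≤ (x2 + v2 * t + (1/2) * a2 * t^2) + (v2 + a2 * t)^2 / (2 * amaxBrake) :=
  loop_invariant_free_driving_same_general aminBrake amaxBrake amaxAccel ρ hmin hminmax hacc x1 x2
    v1 v2 a1 a2 t hv1 hv2 hx hdist ha1u ha2l ht0 htρ hvpos
end

section
/- Loop-invariant preservation under proper response, same direction (inductive step of Theorem 1, case safeDist_s(v1, v2) ≥ x2 − x1): Suppose v1 ≥ 0, v2 ≥ 0, x1 ≤ x2, x1 + v1²/(2·a_minBrake) ≤ x2 + v2²/(2·a_maxBrake), the accelerations satisfy (a1 ≤ −a_minBrake or (v1 = 0 and a1 = 0)) and (a2 ≥ −a_maxBrake or (v2 = 0 and a2 = 0)), 0 ≤ t ≤ ρ, and v1 + a1·s ≥ 0 and v2 + a2·s ≥ 0 for all s ∈ [0, t]. Let (x̃1, ṽ1, x̃2, ṽ2) be the kinematic update of (x1, v1, x2, v2) over duration t with accelerations a1, a2. Then x̃1 ≤ x̃2 and x̃1 + ṽ1²/(2·a_minBrake) ≤ x̃2 + ṽ2²/(2·a_maxBrake). -/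
/-!
Braking at least as hard as `b` can only move the point `x + v² / (2 b)` where a car would come
to rest backwards, and braking at most as hard as `b` can only move it forwards; so the
invariant holds at every `s ∈ [0, t]`. At a time when the follower is at least as fast as the
leader, the invariant and `aminBrake < amaxBrake` force the gap to be nonnegative. Since the
relative velocity is affine, if the follower is slower at time `t`, it is slower on a final
interval starting at time `0` or at a time of equal speeds, on which the gap only grows.
-/

namespace Kinematics

noncomputable section

def position (x v a s : ℝ) : ℝ := x + v * s + (1/2) * a * s^2

def velocity (v a s : ℝ) : ℝ := v + a * s

/-- The point at which a car at `y` with speed `w` comes to rest when braking with deceleration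
`b`. -/
def stoppingPoint (b y w : ℝ) : ℝ := y + w^2 / (2 * b)

end

@[simp] lemma position_zero (x v a : ℝ) : position x v a 0 = x := by
  simp [position]

@[simp] lemma velocity_zero (v a : ℝ) : velocity v a 0 = v := by
  simp [velocity]

lemma continuous_velocity (v a : ℝ) : Continuous (velocity v a) := by
  unfold velocity; fun_prop

lemma position_sub_position (x v a s t : ℝ) :
    position x v a t - position x v a s = (t - s) * (velocity v a s + velocity v a t) / 2 := by
  unfold position velocity; ring

lemma stoppingPoint_after_eq {b : ℝ} (hb : b ≠ 0) (x v a s : ℝ) :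
    stoppingPoint b (position x v a s) (velocity v a s)
      = stoppingPoint b x v + s * (v + velocity v a s) * (b + a) / (2 * b) := by
  unfold stoppingPoint position velocity
  field_simp
  ring

section Braking

variable {b x v a s : ℝ}

lemma stoppingPoint_after_le (hb : 0 < b) (hs : 0 ≤ s) (hv : 0 ≤ v)
    (hvs : 0 ≤ velocity v a s) (ha : a ≤ -b) :
    stoppingPoint b (position x v a s) (velocity v a s) ≤ stoppingPoint b x v := by
  rw [stoppingPoint_after_eq hb.ne']
  have : s * (v + velocity v a s) * (b + a) ≤ 0 :=
    mul_nonpos_of_nonneg_of_nonpos (by positivity) (by linarith)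
  linarith [div_nonpos_of_nonpos_of_nonneg this (by positivity : (0 : ℝ) ≤ 2 * b)]

lemma le_stoppingPoint_after (hb : 0 < b) (hs : 0 ≤ s) (hv : 0 ≤ v)
    (hvs : 0 ≤ velocity v a s) (ha : -b ≤ a) :
    stoppingPoint b x v ≤ stoppingPoint b (position x v a s) (velocity v a s) := by
  rw [stoppingPoint_after_eq hb.ne']
  have : 0 ≤ s * (v + velocity v a s) * (b + a) := mul_nonneg (by positivity) (by linarith)
  linarith [div_nonneg this (by positivity : (0 : ℝ) ≤ 2 * b)]

lemma stoppingPoint_after_le_of_proper (hb : 0 < b) (hs : 0 ≤ s) (hv : 0 ≤ v)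
    (hvs : 0 ≤ velocity v a s) (ha : a ≤ -b ∨ (v = 0 ∧ a = 0)) :
    stoppingPoint b (position x v a s) (velocity v a s) ≤ stoppingPoint b x v := by
  rcases ha with ha | ⟨rfl, rfl⟩
  · exact stoppingPoint_after_le hb hs hv hvs ha
  · simp [stoppingPoint, position, velocity]

lemma le_stoppingPoint_after_of_proper (hb : 0 < b) (hs : 0 ≤ s) (hv : 0 ≤ v)
    (hvs : 0 ≤ velocity v a s) (ha : a ≥ -b ∨ (v = 0 ∧ a = 0)) :
    stoppingPoint b x v ≤ stoppingPoint b (position x v a s) (velocity v a s) := by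
  rcases ha with ha | ⟨rfl, rfl⟩
  · exact le_stoppingPoint_after hb hs hv hvs ha
  · simp [stoppingPoint, position, velocity]

end Braking

lemma le_of_stoppingPoint_le {b₁ b₂ y₁ y₂ w₁ w₂ : ℝ} (hb₁ : 0 < b₁) (hb : b₁ ≤ b₂)
    (hw₂ : 0 ≤ w₂) (hw : w₂ ≤ w₁) (h : stoppingPoint b₁ y₁ w₁ ≤ stoppingPoint b₂ y₂ w₂) :
    y₁ ≤ y₂ := by
  unfold stoppingPoint at h
  have : w₂^2 / (2 * b₂) ≤ w₁^2 / (2 * b₁) :=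
    div_le_div₀ (sq_nonneg _) (pow_le_pow_left₀ hw₂ hw 2) (by positivity) (by linarith)
  linarith

section Gap

variable {x₁ x₂ v₁ v₂ a₁ a₂ : ℝ}

lemma position_le_of_velocity_le {s t : ℝ} (hst : s ≤ t)
    (hs : velocity v₁ a₁ s ≤ velocity v₂ a₂ s) (ht : velocity v₁ a₁ t ≤ velocity v₂ a₂ t)
    (h : position x₁ v₁ a₁ s ≤ position x₂ v₂ a₂ s) :
    position x₁ v₁ a₁ t ≤ position x₂ v₂ a₂ t := by
  have hgain : 0 ≤ (t - s) * ((velocity v₂ a₂ s - velocity v₁ a₁ s)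
      + (velocity v₂ a₂ t - velocity v₁ a₁ t)) := mul_nonneg (by linarith) (by linarith)
  linarith [position_sub_position x₁ v₁ a₁ s t, position_sub_position x₂ v₂ a₂ s t]

lemma position_le_of_forall_stoppingPoint_le {b₁ b₂ t : ℝ} (hb₁ : 0 < b₁) (hb : b₁ ≤ b₂)
    (hx : x₁ ≤ x₂) (ht : 0 ≤ t) (hv₂ : ∀ s ∈ Set.Icc 0 t, 0 ≤ velocity v₂ a₂ s)
    (hinv : ∀ s ∈ Set.Icc 0 t, stoppingPoint b₁ (position x₁ v₁ a₁ s) (velocity v₁ a₁ s)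
      ≤ stoppingPoint b₂ (position x₂ v₂ a₂ s) (velocity v₂ a₂ s)) :
    position x₁ v₁ a₁ t ≤ position x₂ v₂ a₂ t := by
  have gap_of_faster : ∀ s ∈ Set.Icc 0 t, velocity v₂ a₂ s ≤ velocity v₁ a₁ s →
      position x₁ v₁ a₁ s ≤ position x₂ v₂ a₂ s := fun s hs hw =>
    le_of_stoppingPoint_le hb₁ hb (hv₂ s hs) hw (hinv s hs)
  have ht' : t ∈ Set.Icc 0 t := ⟨ht, le_rfl⟩
  rcases le_total (velocity v₂ a₂ t) (velocity v₁ a₁ t) with hfaster | hslower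
  · exact gap_of_faster t ht' hfaster
  rcases le_total v₁ v₂ with hslower₀ | hfaster₀
  · exact position_le_of_velocity_le ht (by simpa using hslower₀) hslower (by simpa using hx)
  obtain ⟨S, hS, hSeq⟩ : ∃ S ∈ Set.Icc 0 t, velocity v₂ a₂ S - velocity v₁ a₁ S = 0 :=
    intermediate_value_Icc ht
      ((continuous_velocity v₂ a₂).sub (continuous_velocity v₁ a₁)).continuousOn
      ⟨by simpa using hfaster₀, by simpa using hslower⟩
  exact position_le_of_velocity_le hS.2 (by linarith) hslower
    (gap_of_faster S hS (by linarith))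

end Gap

end Kinematics

open Kinematics in
theorem loop_invariant_proper_response_same_general
    (aminBrake amaxBrake : ℝ)
    (hmin : 0 < aminBrake) (hminmax : aminBrake < amaxBrake)
    (x1 x2 v1 v2 a1 a2 t : ℝ)
    (hv1 : v1 ≥ 0) (hv2 : v2 ≥ 0) (hx : x1 ≤ x2)
    (hinv : x1 + v1^2 / (2 * aminBrake) ≤ x2 + v2^2 / (2 * amaxBrake))
    (ha1 : a1 ≤ -aminBrake ∨ (v1 = 0 ∧ a1 = 0))
    (ha2 : a2 ≥ -amaxBrake ∨ (v2 = 0 ∧ a2 = 0))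
    (ht0 : 0 ≤ t)
    (hvpos : ∀ s : ℝ, 0 ≤ s → s ≤ t → v1 + a1 * s ≥ 0 ∧ v2 + a2 * s ≥ 0) :
    x1 + v1 * t + (1/2) * a1 * t^2 ≤ x2 + v2 * t + (1/2) * a2 * t^2 ∧
    (x1 + v1 * t + (1/2) * a1 * t^2) + (v1 + a1 * t)^2 / (2 * aminBrake)
      ≤ (x2 + v2 * t + (1/2) * a2 * t^2) + (v2 + a2 * t)^2 / (2 * amaxBrake) := by
  have hinv_at : ∀ s ∈ Set.Icc 0 t,
      stoppingPoint aminBrake (position x1 v1 a1 s) (velocity v1 a1 s)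
        ≤ stoppingPoint amaxBrake (position x2 v2 a2 s) (velocity v2 a2 s) := fun s hs =>
    calc _ ≤ stoppingPoint aminBrake x1 v1 :=
          stoppingPoint_after_le_of_proper hmin hs.1 hv1 (hvpos s hs.1 hs.2).1 ha1
      _ ≤ stoppingPoint amaxBrake x2 v2 := hinv
      _ ≤ _ := le_stoppingPoint_after_of_proper (hmin.trans hminmax) hs.1 hv2
          (hvpos s hs.1 hs.2).2 ha2
  exact ⟨position_le_of_forall_stoppingPoint_le hmin hminmax.le hx ht0
      (fun s hs => (hvpos s hs.1 hs.2).2) hinv_at, hinv_at t ⟨ht0, le_rfl⟩⟩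

/-- Loop-invariant preservation under proper response, same direction. -/
theorem loop_invariant_proper_response_same
    (aminBrake amaxBrake amaxAccel ρ : ℝ)
    (hmin : 0 < aminBrake) (hminmax : aminBrake < amaxBrake)
    (hacc : 0 < amaxAccel) (hρ : 0 < ρ)
    (x1 x2 v1 v2 a1 a2 t : ℝ)
    (hv1 : v1 ≥ 0) (hv2 : v2 ≥ 0) (hx : x1 ≤ x2)
    (hinv : x1 + v1^2 / (2 * aminBrake) ≤ x2 + v2^2 / (2 * amaxBrake))
    (ha1 : a1 ≤ -aminBrake ∨ (v1 = 0 ∧ a1 = 0))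
    (ha2 : a2 ≥ -amaxBrake ∨ (v2 = 0 ∧ a2 = 0))
    (ht0 : 0 ≤ t) (htρ : t ≤ ρ)
    (hvpos : ∀ s : ℝ, 0 ≤ s → s ≤ t → v1 + a1 * s ≥ 0 ∧ v2 + a2 * s ≥ 0) :
    x1 + v1 * t + (1/2) * a1 * t^2 ≤ x2 + v2 * t + (1/2) * a2 * t^2 ∧
    (x1 + v1 * t + (1/2) * a1 * t^2) + (v1 + a1 * t)^2 / (2 * aminBrake)
      ≤ (x2 + v2 * t + (1/2) * a2 * t^2) + (v2 + a2 * t)^2 / (2 * amaxBrake) :=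
  loop_invariant_proper_response_same_general aminBrake amaxBrake hmin hminmax x1 x2 v1 v2 a1 a2 t
    hv1 hv2 hx hinv ha1 ha2 ht0 hvpos
end

section
/- Front-car progress cut, same direction: If v2 ≥ 0, t ≥ 0, a_maxBrake > 0, a2 ≥ −a_maxBrake, and v2 + a2·t ≥ 0, then v2·t + (1/2)·a2·t² + (v2 + a2·t)²/(2·a_maxBrake) ≥ v2²/(2·a_maxBrake); i.e., the distance traveled plus the remaining maximal-braking stopping distance is at least the initial maximal-braking stopping distance. -/
/-!
Multiplying out, the excess of the left side over the right side factors as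
`t (A + a) (v + (v + a t)) / (2 A)`, with `A` the maximal braking deceleration; each factor is
nonnegative because `t ≥ 0`, `a ≥ -A`, and both the initial and final speeds are nonnegative.
-/

lemma progress_add_stopping_sub_stopping (v a t A : ℝ) (hA : A ≠ 0) :
    v * t + (1/2) * a * t^2 + (v + a * t)^2 / (2 * A) - v^2 / (2 * A)
      = t * (A + a) * (v + (v + a * t)) / (2 * A) := by
  field_simp
  ring

/-- Front-car progress cut, same direction. -/
theorem front_car_progress_cut
    (v2 a2 t amaxBrake : ℝ)
    (hv2 : v2 ≥ 0) (ht0 : t ≥ 0) (hmax : amaxBrake > 0)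
    (ha2 : a2 ≥ -amaxBrake) (hvt : v2 + a2 * t ≥ 0) :
    v2 * t + (1/2) * a2 * t^2 + (v2 + a2 * t)^2 / (2 * amaxBrake)
      ≥ v2^2 / (2 * amaxBrake) := by
  rw [ge_iff_le, ← sub_nonneg, progress_add_stopping_sub_stopping v2 a2 t amaxBrake hmax.ne']
  have hbrake : 0 ≤ amaxBrake + a2 := by linarith
  have hspeeds : 0 ≤ v2 + (v2 + a2 * t) := by linarith
  positivity
end

section
/- Rear-car braking cut, proper response: If v1 ≥ 0, t ≥ 0, a_minBrake > 0, a1 ≤ −a_minBrake, and v1 + a1·t ≥ 0, then v1·t + (1/2)·a1·t² + (v1 + a1·t)²/(2·a_minBrake) ≤ v1²/(2·a_minBrake); i.e., when decelerating at rate at least a_minBrake, the distance traveled plus the remaining minimum-braking stopping distance never exceeds the initial minimum-braking stopping distance. -/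
/-! With final speed `v + a t`, the distance covered is `t (v + (v + a t)) / 2`, while the
minimum-braking stopping distance drops by `(v² - (v + a t)²) / (2 b) = (-a / b) · t (v + (v + a t)) / 2`.
Since `-a / b ≥ 1`, the drop is at least the distance covered. -/

theorem stopping_distance_sub_eq (v a t b : ℝ) (hb : b ≠ 0) :
    v ^ 2 / (2 * b) - (v * t + (1/2) * a * t ^ 2 + (v + a * t) ^ 2 / (2 * b))
      = t * (-b - a) * (v + (v + a * t)) / (2 * b) := by
  field_simp
  ring

/-- Rear-car braking cut, proper response. -/
theorem rear_car_braking_cut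
    (v1 a1 t aminBrake : ℝ)
    (hv1 : v1 ≥ 0) (ht0 : t ≥ 0) (hmin : aminBrake > 0)
    (ha1 : a1 ≤ -aminBrake) (hvt : v1 + a1 * t ≥ 0) :
    v1 * t + (1/2) * a1 * t^2 + (v1 + a1 * t)^2 / (2 * aminBrake)
      ≤ v1^2 / (2 * aminBrake) := by
  rw [← sub_nonneg, stopping_distance_sub_eq v1 a1 t aminBrake hmin.ne']
  have hrate : 0 ≤ -aminBrake - a1 := by linarith
  have hspeeds : 0 ≤ v1 + (v1 + a1 * t) := by linarith
  positivity
end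

section
/- Backward-car braking cut, opposite-direction proper response: If v2 ≤ 0, t ≥ 0, a_minBrake > 0, a2 ≥ a_minBrake, and v2 + a2·t ≤ 0, then (v2 + a2·t)²/(2·a_minBrake) − (v2·t + (1/2)·a2·t²) ≤ v2²/(2·a_minBrake); i.e., when the backward-moving car decelerates at rate at least a_minBrake, its furthest backward reach x2 + v2·t + (1/2)·a2·t² − (v2 + a2·t)²/(2·a_minBrake) never drops below the initial furthest backward reach x2 − v2²/(2·a_minBrake). -/
/-! With `w = v + a t`, both the change `(w² - v²) / (2b)` of the stopping distance and the
distance `v t + a t² / 2` covered are multiples of `t (v + w)`, with ratios `a / (2b)` and `1 / 2`.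
Their difference `t (v + w) (a - b) / (2b)` is nonpositive when the car moves backward
throughout (`v + w ≤ 0`) and brakes at least as hard as `b`. -/

theorem stoppingReach_change_eq (v a t b : ℝ) (hb : b ≠ 0) :
    (v + a * t) ^ 2 / (2 * b) - (v * t + (1 / 2) * a * t ^ 2) - v ^ 2 / (2 * b)
      = t * (2 * v + a * t) * (a - b) / (2 * b) := by
  field_simp
  ring

theorem stoppingReach_change_nonpos {v a t b : ℝ} (hb : 0 < b) (hab : b ≤ a) (ht : 0 ≤ t)
    (hbackward : 2 * v + a * t ≤ 0) :
    t * (2 * v + a * t) * (a - b) / (2 * b) ≤ 0 :=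
  div_nonpos_of_nonpos_of_nonneg
    (mul_nonpos_of_nonpos_of_nonneg (mul_nonpos_of_nonneg_of_nonpos ht hbackward)
      (sub_nonneg.2 hab))
    (by positivity)

/-- Backward-car braking cut, opposite-direction proper response. -/
theorem backward_car_braking_cut
    (v2 a2 t aminBrake : ℝ)
    (hv2 : v2 ≤ 0) (ht0 : t ≥ 0) (hmin : aminBrake > 0)
    (ha2 : a2 ≥ aminBrake) (hvt : v2 + a2 * t ≤ 0) :
    (v2 + a2 * t)^2 / (2 * aminBrake) - (v2 * t + (1/2) * a2 * t^2)
      ≤ v2^2 / (2 * aminBrake) := by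
  rw [← sub_nonpos, stoppingReach_change_eq v2 a2 t aminBrake hmin.ne']
  exact stoppingReach_change_nonpos hmin ha2 ht0 (by linarith)
end
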